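/- arXiv:1705.08586 — 2 statements merged into one kernel-verified Lean document; each statement's English description precedes it below -/
import Mathlib

section
/- For τ ∈ (11/32, 1/2) and ε' ∈ (f(τ), 1/2), the strict inequality (3/2+ε')²τ/4 + (1/2)·(1 - (3/2+ε')²/4) - τ·ε'² < τ holds, where f(τ) = [3(τ-1/2) + √(9(τ-1/2)² - 7(τ-1/2)(3τ+1/2))]/[2(3τ+1/2)]. -/
/-- The threshold function `f(τ)` for the scaled radius of the unhappy region. -/
noncomputable def fThresh (τ : ℝ) : ℝ :=
  (3 * (τ - 1 / 2) +
      Real.sqrt (9 * (τ - 1 / 2) ^ 2 - 7 * (τ - 1 / 2) * (3 * τ + 1 / 2))) /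
    (2 * (3 * τ + 1 / 2))

/-- For `τ ∈ (11/32, 1/2)` and `ε' ∈ (f(τ), 1/2)`, the limiting
triggering inequality `(3/2+ε')²τ/4 + (1/2)(1 - (3/2+ε')²/4) - τε'² < τ` holds. -/
theorem triggering_inequality
    (τ ε' : ℝ) (h1 : 11 / 32 < τ) (h2 : τ < 1 / 2)
    (h3 : fThresh τ < ε') (h4 : ε' < 1 / 2) :
    (3 / 2 + ε') ^ 2 * τ / 4 + (1 / 2) * (1 - (3 / 2 + ε') ^ 2 / 4) - τ * ε' ^ 2 < τ := by
  have hA : (0:ℝ) < 3 * τ + 1 / 2 := by linarith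
  have hD : 0 ≤ 9 * (τ - 1 / 2) ^ 2 - 7 * (τ - 1 / 2) * (3 * τ + 1 / 2) := by nlinarith
  set s := Real.sqrt (9 * (τ - 1 / 2) ^ 2 - 7 * (τ - 1 / 2) * (3 * τ + 1 / 2)) with hs
  have hs2 : s ^ 2 = 9 * (τ - 1 / 2) ^ 2 - 7 * (τ - 1 / 2) * (3 * τ + 1 / 2) := Real.sq_sqrt hD
  have hs0 : 0 ≤ s := Real.sqrt_nonneg _
  have key : 3 * (τ - 1 / 2) + s < 2 * (3 * τ + 1 / 2) * ε' := by
    have h3' := h3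
    unfold fThresh at h3'
    rw [div_lt_iff₀ (by linarith)] at h3'
    linarith [h3']
  nlinarith [sq_nonneg s, key, mul_pos hA hA, sq_nonneg (2 * (3 * τ + 1 / 2) * ε' - 3 * (τ - 1 / 2))]
end

section
/- (FKG inequality for product measures on finitely many sites) Let Ω = {0,1}^V for a finite set V, equipped with a product probability measure. If A and B are increasing events (with respect to the coordinatewise partial order), then P(A ∩ B) ≥ P(A)·P(B). -/
open Finset
open scoped Classical

/-- FKG inequality for product measures on `{0,1}^V` with `V`
finite.  Configurations are `ω : V → Bool`, the product measure gives weight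
`∏_v (p v if ω v else 1 - p v)` to `ω`, and an event `A` is increasing if it
is upward closed for the coordinatewise order.  Then
`P(A ∩ B) ≥ P(A)·P(B)` for increasing events `A, B`. -/
theorem fkg_product_measure
    (V : Type*) [Fintype V] (p : V → ℝ) (hp : ∀ v, p v ∈ Set.Icc (0 : ℝ) 1)
    (A B : Set (V → Bool))
    (hA : ∀ ω ω' : V → Bool, (∀ v, ω v ≤ ω' v) → ω ∈ A → ω' ∈ A)
    (hB : ∀ ω ω' : V → Bool, (∀ v, ω v ≤ ω' v) → ω ∈ B → ω' ∈ B) :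
    (∑ ω : V → Bool, if ω ∈ A then ∏ v, (if ω v then p v else 1 - p v) else 0) *
      (∑ ω : V → Bool, if ω ∈ B then ∏ v, (if ω v then p v else 1 - p v) else 0) ≤
    (∑ ω : V → Bool, if ω ∈ A ∩ B then ∏ v, (if ω v then p v else 1 - p v) else 0) := by
  set μ : (V → Bool) → ℝ := fun ω => ∏ v, (if ω v then p v else 1 - p v) with hμdef
  have hμ0 : 0 ≤ μ := by
    intro ω
    apply Finset.prod_nonneg
    intro v _
    rcases hp v with ⟨h1, h2⟩
    split <;> linarith
  set f : (V → Bool) → ℝ := fun ω => if ω ∈ A then 1 else 0 with hfdef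
  set g : (V → Bool) → ℝ := fun ω => if ω ∈ B then 1 else 0 with hgdef
  have hf0 : 0 ≤ f := fun ω => by simp [hfdef]; split <;> norm_num
  have hg0 : 0 ≤ g := fun ω => by simp [hgdef]; split <;> norm_num
  have hfm : Monotone f := by
    intro ω ω' hle
    simp only [hfdef]
    by_cases h : ω ∈ A
    · rw [if_pos h, if_pos (hA ω ω' (fun v => hle v) h)]
    · rw [if_neg h]; split <;> norm_num
  have hgm : Monotone g := by
    intro ω ω' hle
    simp only [hgdef]
    by_cases h : ω ∈ B
    · rw [if_pos h, if_pos (hB ω ω' (fun v => hle v) h)]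
    · rw [if_neg h]; split <;> norm_num
  have hμlat : ∀ a b : V → Bool, μ a * μ b ≤ μ (a ⊓ b) * μ (a ⊔ b) := by
    intro a b
    simp only [hμdef, ← Finset.prod_mul_distrib]
    apply le_of_eq
    apply Finset.prod_congr rfl
    intro v _
    simp only [Pi.inf_apply, Pi.sup_apply]
    by_cases ha : a v = true <;> by_cases hb : b v = true <;>
      (try simp only [Bool.not_eq_true] at ha hb) <;> simp [ha, hb] <;> ring
  have key := fkg (μ := μ) (f := f) (g := g) hμ0 hf0 hg0 hfm hgm hμlat
  have hsum1 : ∑ ω : V → Bool, μ ω = 1 := by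
    simp only [hμdef]
    rw [← Fintype.prod_sum (fun v (b : Bool) => if b then p v else 1 - p v)]
    have : ∀ v : V, (∑ b : Bool, if b then p v else 1 - p v) = 1 := by
      intro v; simp
    simp only [this, Finset.prod_const_one]
  rw [hsum1, one_mul] at key
  have eA : (∑ ω : V → Bool, if ω ∈ A then ∏ v, (if ω v then p v else 1 - p v) else 0)
      = ∑ ω : V → Bool, μ ω * f ω := by
    apply Finset.sum_congr rfl
    intro ω _
    simp only [hfdef, hμdef]
    split <;> simp
  have eB : (∑ ω : V → Bool, if ω ∈ B then ∏ v, (if ω v then p v else 1 - p v) else 0)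
      = ∑ ω : V → Bool, μ ω * g ω := by
    apply Finset.sum_congr rfl
    intro ω _
    simp only [hgdef, hμdef]
    split <;> simp
  have eAB : (∑ ω : V → Bool, if ω ∈ A ∩ B then ∏ v, (if ω v then p v else 1 - p v) else 0)
      = ∑ ω : V → Bool, μ ω * (f ω * g ω) := by
    apply Finset.sum_congr rfl
    intro ω _
    simp only [hfdef, hgdef, hμdef, Set.mem_inter_iff]
    by_cases h1 : ω ∈ A <;> by_cases h2 : ω ∈ B <;> simp [h1, h2]
  rw [eA, eB, eAB]
  exact key
end
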